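/- For every structured tree (T,g), if every graph g(v) is triangle-free, then the realization R(T,g) is triangle-free. -/

import Mathlib

/-- A structured tree: a rooted tree together with, at each internal node,
a graph on its children. A `leaf` is a tree with a single (leaf) node; a
`node ι c g` has children indexed by `ι`, subtrees `c i`, and the graph `g`
on the children. -/
inductive STree : Type 1 where
  | leaf : STree
  | node : (ι : Type) → (ι → STree) → SimpleGraph ι → STree

namespace STree

/-- The type of nodes of a structured tree. -/
def NodeType : STree → Type
  | leaf => PUnit
  | node ι c _ => PUnit ⊕ Σ i : ι, NodeType (c i)

/-- The type of branches (root-to-leaf paths) of a structured tree. -/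
def Branch : STree → Type
  | leaf => PUnit
  | node _ c _ => Σ i, Branch (c i)

/-- The root of a structured tree, as a node. -/
def root : (t : STree) → t.NodeType
  | leaf => PUnit.unit
  | node _ _ _ => Sum.inl PUnit.unit

/-- `onBranch t b u` means that the node `u` lies on the branch `b`. -/
def onBranch : (t : STree) → t.Branch → t.NodeType → Prop
  | leaf, _, _ => True
  | node _ c _, ⟨i, b⟩, u =>
      match u with
      | Sum.inl _ => True
      | Sum.inr ⟨j, w⟩ => ∃ h : j = i, onBranch (c i) b (h ▸ w)

/-- Adjacency between tree nodes in the realization: the union of the edges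
of the graphs `g(v)` placed on the children of each internal node `v`
(tree edges are *not* included). -/
def treeAdj : (t : STree) → t.NodeType → t.NodeType → Prop
  | leaf, _, _ => False
  | node ι c g, u, v =>
      match u, v with
      | Sum.inr ⟨i, u'⟩, Sum.inr ⟨j, v'⟩ =>
          (∃ h : i = j, treeAdj (c j) (h ▸ u') v') ∨
          (g.Adj i j ∧ u' = root (c i) ∧ v' = root (c j))
      | _, _ => False

/-- The realization `R(T,g)` of a structured tree: its vertices are the tree
nodes together with the branches; edges are those of the graphs `g(v)`, plus
an edge from each branch vertex to every tree node lying on that branch. -/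
def realization (t : STree) : SimpleGraph (t.NodeType ⊕ t.Branch) :=
  SimpleGraph.fromRel (fun x y =>
    match x, y with
    | Sum.inl u, Sum.inl v => treeAdj t u v
    | Sum.inl u, Sum.inr b => onBranch t b u
    | Sum.inr b, Sum.inl u => onBranch t b u
    | Sum.inr _, Sum.inr _ => False)

/-- The level of a node (the root is at level 1). -/
def level : (t : STree) → t.NodeType → ℕ
  | leaf, _ => 1
  | node _ c _, u =>
      match u with
      | Sum.inl _ => 1
      | Sum.inr ⟨i, w⟩ => level (c i) w + 1

/-- `IsInternalGraphOf t ⟨ι, g⟩` means that `g` is the graph attached to some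
internal node of `t` (on its children, indexed by `ι`). -/
inductive IsInternalGraphOf : STree → (Σ ι : Type, SimpleGraph ι) → Prop where
  | here : ∀ (ι : Type) (c : ι → STree) (g : SimpleGraph ι),
      IsInternalGraphOf (node ι c g) ⟨ι, g⟩
  | child : ∀ (ι : Type) (c : ι → STree) (g : SimpleGraph ι) (i : ι) (p),
      IsInternalGraphOf (c i) p → IsInternalGraphOf (node ι c g) p

end STree

/-- Builds the structured tree in which all nodes at level `i` carry the
`i`-th graph of the list on their children (so the tree has `L.length + 1`
levels). -/
def buildTree : List (Σ V : Type, SimpleGraph V) → STree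
  | [] => .leaf
  | ⟨ι, g⟩ :: rest => .node ι (fun _ => buildTree rest) g

/-- The realization of a structured tree, packaged with its vertex type. -/
def realizationSigma (t : STree) : Σ V : Type, SimpleGraph V :=
  ⟨t.NodeType ⊕ t.Branch, t.realization⟩

/-- `twincutList m` is the list `[G₂, G₃, …, G_{m+1}]` of twincut graphs. -/
def twincutList : ℕ → List (Σ V : Type, SimpleGraph V)
  | 0 => []
  | m + 1 => twincutList m ++ [realizationSigma (buildTree (twincutList m))]

/-- The structured tree `T_{m+2}` whose realization is the twincut graph
`G_{m+2}`: it has `m + 1` levels, and every node at level `i ≤ m` carries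
the graph `G_{i+1}` on its children. -/
def twincutTree (m : ℕ) : STree := buildTree (twincutList m)

/-- The twincut graphs: `G 1` is the one-vertex graph, and for `k ≥ 2`,
`G k` is the realization of the structured tree `T_k`. -/
def twincutG : ℕ → Σ V : Type, SimpleGraph V
  | 0 => ⟨PUnit, ⊥⟩
  | 1 => ⟨PUnit, ⊥⟩
  | (m + 2) => realizationSigma (twincutTree m)


/-
Branch vertices are pairwise non-adjacent and the tree nodes on one branch are
pairwise non-adjacent, so a triangle of `R(T,g)` lies among the tree nodes. There one inducts
on the tree: a node other than the root of its child subtree has all its neighbours in that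
subtree, so a triangle either lies inside one child subtree or consists of three child roots,
in which case it is a triangle of `g`.
-/

theorem SimpleGraph.cliqueFree_three_iff {V : Type*} {G : SimpleGraph V} :
    G.CliqueFree 3 ↔ ∀ a b c, G.Adj a b → G.Adj a c → G.Adj b c → False := by
  classical
  refine ⟨fun h a b c hab hac hbc => h {a, b, c} (is3Clique_triple_iff.2 ⟨hab, hac, hbc⟩), ?_⟩
  intro h s hs
  obtain ⟨a, b, c, hab, hac, hbc, -⟩ := is3Clique_iff.1 hs
  exact h a b c hab hac hbc

namespace STree

theorem treeAdj_irrefl (t : STree) (u : t.NodeType) : ¬ t.treeAdj u u := by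
  induction t with
  | leaf => exact id
  | node ι c g ih =>
    rcases u with _ | ⟨i, u⟩
    · exact id
    · rintro (⟨_, h⟩ | ⟨h, -, -⟩)
      exacts [ih i u h, g.irrefl h]

theorem treeAdj_symm (t : STree) {u v : t.NodeType} (h : t.treeAdj u v) : t.treeAdj v u := by
  induction t with
  | leaf => exact h
  | node ι c g ih =>
    rcases u with _ | ⟨i, u⟩ <;> rcases v with _ | ⟨j, v⟩
    all_goals try exact h.elim
    rcases h with ⟨rfl, h⟩ | ⟨h, hu, hv⟩
    exacts [Or.inl ⟨rfl, ih i h⟩, Or.inr ⟨h.symm, hv, hu⟩]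

def treeGraph (t : STree) : SimpleGraph t.NodeType where
  Adj := t.treeAdj
  symm := ⟨fun _ _ => t.treeAdj_symm⟩
  loopless := ⟨t.treeAdj_irrefl⟩

theorem not_treeAdj_of_onBranch (t : STree) {b : t.Branch} {u v : t.NodeType}
    (hu : t.onBranch b u) (hv : t.onBranch b v) : ¬ t.treeAdj u v := by
  induction t with
  | leaf => exact id
  | node ι c g ih =>
    obtain ⟨k, b⟩ := b
    rcases u with _ | ⟨i, u⟩ <;> rcases v with _ | ⟨j, v⟩
    all_goals try exact id
    obtain ⟨rfl, hu⟩ := hu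
    obtain ⟨rfl, hv⟩ := hv
    rintro (⟨_, h⟩ | ⟨h, -, -⟩)
    exacts [ih _ hu hv h, g.irrefl h]

section node

variable {ι : Type} {c : ι → STree} {g : SimpleGraph ι}

theorem treeAdj_node_inr_iff {i : ι} {u v : (c i).NodeType} :
    (node ι c g).treeAdj (.inr ⟨i, u⟩) (.inr ⟨i, v⟩) ↔ (c i).treeAdj u v := by
  refine ⟨?_, fun h => Or.inl ⟨rfl, h⟩⟩
  rintro (⟨_, h⟩ | ⟨h, -, -⟩)
  exacts [h, (g.irrefl h).elim]

theorem treeAdj_node_root_iff {i j : ι} :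
    (node ι c g).treeAdj (.inr ⟨i, (c i).root⟩) (.inr ⟨j, (c j).root⟩) ↔ g.Adj i j := by
  refine ⟨?_, fun h => Or.inr ⟨h, rfl, rfl⟩⟩
  rintro (⟨rfl, h⟩ | ⟨h, -, -⟩)
  exacts [(treeAdj_irrefl _ _ h).elim, h]

theorem exists_eq_inr_of_treeAdj_node {i : ι} {u : (c i).NodeType} (hu : u ≠ (c i).root)
    {y : (node ι c g).NodeType} (h : (node ι c g).treeAdj (.inr ⟨i, u⟩) y) :
    ∃ v, y = .inr ⟨i, v⟩ ∧ (c i).treeAdj u v := by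
  rcases y with _ | ⟨j, v⟩
  · exact h.elim
  · rcases h with ⟨rfl, h⟩ | ⟨-, rfl, -⟩
    exacts [⟨v, rfl, h⟩, (hu rfl).elim]

theorem not_treeAdj_triangle_node_of_ne_root (hc : ∀ i, (c i).treeGraph.CliqueFree 3)
    {i : ι} {u : (c i).NodeType} (hu : u ≠ (c i).root) {y z : (node ι c g).NodeType}
    (hxy : (node ι c g).treeAdj (.inr ⟨i, u⟩) y) (hxz : (node ι c g).treeAdj (.inr ⟨i, u⟩) z)
    (hyz : (node ι c g).treeAdj y z) : False := by
  obtain ⟨v, rfl, huv⟩ := exists_eq_inr_of_treeAdj_node hu hxy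
  obtain ⟨w, rfl, huw⟩ := exists_eq_inr_of_treeAdj_node hu hxz
  exact SimpleGraph.cliqueFree_three_iff.1 (hc i) u v w huv huw (treeAdj_node_inr_iff.1 hyz)

theorem treeGraph_node_cliqueFree (hg : g.CliqueFree 3)
    (hc : ∀ i, (c i).treeGraph.CliqueFree 3) : (node ι c g).treeGraph.CliqueFree 3 := by
  rw [SimpleGraph.cliqueFree_three_iff]
  rintro (_ | ⟨i, u⟩) y z hxy hxz hyz
  · exact hxy.elim
  rcases y with _ | ⟨j, v⟩
  · exact hxy.elim
  rcases z with _ | ⟨k, w⟩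
  · exact hxz.elim
  by_cases hu : u = (c i).root
  · by_cases hv : v = (c j).root
    · by_cases hw : w = (c k).root
      · subst hu hv hw
        exact SimpleGraph.cliqueFree_three_iff.1 hg i j k (treeAdj_node_root_iff.1 hxy)
          (treeAdj_node_root_iff.1 hxz) (treeAdj_node_root_iff.1 hyz)
      · exact not_treeAdj_triangle_node_of_ne_root hc hw (treeAdj_symm _ hxz)
          (treeAdj_symm _ hyz) hxy
    · exact not_treeAdj_triangle_node_of_ne_root hc hv (treeAdj_symm _ hxy) hyz hxz
  · exact not_treeAdj_triangle_node_of_ne_root hc hu hxy hxz hyz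

end node

theorem treeGraph_cliqueFree (t : STree)
    (hg : ∀ p : Σ ι : Type, SimpleGraph ι, t.IsInternalGraphOf p → p.2.CliqueFree 3) :
    t.treeGraph.CliqueFree 3 := by
  induction t with
  | leaf => exact SimpleGraph.cliqueFree_three_iff.2 fun _ _ _ h => h.elim
  | node ι c g ih =>
    exact treeGraph_node_cliqueFree (hg _ (.here ι c g))
      fun i => ih i fun p hp => hg p (.child ι c g i p hp)

section realization

variable {t : STree}

theorem realization_adj_inl_inl {u v : t.NodeType} :
    t.realization.Adj (.inl u) (.inl v) ↔ t.treeGraph.Adj u v := by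
  simp only [realization, SimpleGraph.fromRel_adj, ne_eq, Sum.inl.injEq]
  exact ⟨fun h => h.2.elim id (treeAdj_symm t),
    fun h => ⟨t.treeGraph.ne_of_adj h, Or.inl h⟩⟩

theorem realization_adj_inl_inr {u : t.NodeType} {b : t.Branch} :
    t.realization.Adj (.inl u) (.inr b) ↔ t.onBranch b u := by
  simp [realization, SimpleGraph.fromRel_adj]

theorem realization_not_adj_inr_inr {b b' : t.Branch} :
    ¬ t.realization.Adj (.inr b) (.inr b') := by
  simp [realization, SimpleGraph.fromRel_adj]

theorem realization_not_adj_of_adj_inr {b : t.Branch} {x y : t.NodeType ⊕ t.Branch}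
    (hx : t.realization.Adj (.inr b) x) (hy : t.realization.Adj (.inr b) y) :
    ¬ t.realization.Adj x y := by
  rcases x with u | b₁
  · rcases y with v | b₂
    · rw [realization_adj_inl_inl]
      exact not_treeAdj_of_onBranch t (realization_adj_inl_inr.1 hx.symm)
        (realization_adj_inl_inr.1 hy.symm)
    · exact (realization_not_adj_inr_inr hy).elim
  · exact (realization_not_adj_inr_inr hx).elim

end realization

end STree

/-- if every graph attached to an internal node of a structured
tree is triangle-free, then its realization is triangle-free. -/
theorem realization_triangleFree (t : STree)
    (hg : ∀ p : Σ ι : Type, SimpleGraph ι, t.IsInternalGraphOf p → p.2.CliqueFree 3) :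
    t.realization.CliqueFree 3 := by
  have hT := SimpleGraph.cliqueFree_three_iff.1 (t.treeGraph_cliqueFree hg)
  rw [SimpleGraph.cliqueFree_three_iff]
  rintro (u | b) (v | b') (w | b'') hxy hxz hyz
  · exact hT u v w (STree.realization_adj_inl_inl.1 hxy) (STree.realization_adj_inl_inl.1 hxz)
      (STree.realization_adj_inl_inl.1 hyz)
  · exact STree.realization_not_adj_of_adj_inr hxz.symm hyz.symm hxy
  · exact STree.realization_not_adj_of_adj_inr hxy.symm hyz hxz
  · exact STree.realization_not_adj_of_adj_inr hxy.symm hyz hxz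
  all_goals exact STree.realization_not_adj_of_adj_inr hxy hxz hyz
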